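/- Let G be a trimmed Glushkov automaton over {a} with a unique non-trivial orbit O of size ℓ, unique in-gate o_in and unique out-gate o_out of O, and suppose the unique word reaching the unique predecessor s of o_in outside O from the initial state has length m. Then for every word w over {a}: o_out ∈ δ(i, w) if and only if |w| = m + c·ℓ for some integer c ≥ 1. -/

import Mathlib

namespace BD

/-- Language-level First: symbols beginning some word of `L`. -/
def LFirst {α : Type*} (L : Set (List α)) : Set α := {x | ∃ w, x :: w ∈ L}

/-- Language-level Last. -/
def LLast {α : Type*} (L : Set (List α)) : Set α := {x | ∃ w, w ++ [x] ∈ L}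

/-- Language-level Follow. -/
def LFollow {α : Type*} (L : Set (List α)) (x : α) : Set α :=
  {y | ∃ u v, u ++ x :: y :: v ∈ L}

/-- The list of symbol occurrences of a regular expression. -/
def rchars {α : Type*} : RegularExpression α → List α
  | .zero => []
  | .epsilon => []
  | .char a => [a]
  | .plus p q => rchars p ++ rchars q
  | .comp p q => rchars p ++ rchars q
  | .star p => rchars p

/-- The Glushkov automaton of a (marked) language `L` over positions `π`,
with labelling map `f` dropping the marks. States are `Option π`, `none` being initial. -/
def glushkov {π β : Type*} (L : Set (List π)) (f : π → β) : NFA β (Option π) where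
  step q b :=
    match q with
    | none => {s | ∃ y, y ∈ LFirst L ∧ f y = b ∧ s = some y}
    | some x => {s | ∃ y, y ∈ LFollow L x ∧ f y = b ∧ s = some y}
  start := {none}
  accept := {s | ∃ y, y ∈ LLast L ∧ s = some y} ∪ {s | s = none ∧ [] ∈ L}

/-- Determinism of an automaton. -/
def Det {β σ : Type*} (A : NFA β σ) : Prop :=
  (∃ i, A.start = {i}) ∧
  ∀ p b q₁ q₂, q₁ ∈ A.step p b → q₂ ∈ A.step p b → q₁ = q₂

/-- `k`-lookahead determinism of an automaton. -/
def kLA {β σ : Type*} (A : NFA β σ) (k : ℕ) : Prop :=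
  (∃ i, A.start = {i}) ∧
  ∀ p b q₁ q₂, q₁ ∈ A.step p b → q₂ ∈ A.step p b → q₁ ≠ q₂ →
    ∀ w : List β, w.length = k - 1 → A.evalFrom {q₁} w = ∅ ∨ A.evalFrom {q₂} w = ∅

/-- `k`-block determinism of a block automaton (labels are nonempty words of length ≤ k,
single initial state, no outgoing label a prefix of another outgoing label). -/
def kBD {γ σ : Type*} (A : NFA (List γ) σ) (k : ℕ) : Prop :=
  (∃ i, A.start = {i}) ∧
  (∀ q b, (A.step q b).Nonempty → 1 ≤ b.length ∧ b.length ≤ k) ∧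
  (∀ p b₁ b₂ q₁ q₂, q₁ ∈ A.step p b₁ → q₂ ∈ A.step p b₂ →
      (b₁, q₁) ≠ (b₂, q₂) → ¬ b₁ <+: b₂)

/-- A language over `γ` is `k`-block deterministic if it is specified by a block
regular expression (given by its marked version `E` over positions `π` together with
the dropping map `f` to blocks) whose Glushkov automaton is `k`-block deterministic. -/
def IsKBlockDet {γ : Type} (L : Set (List γ)) (k : ℕ) : Prop :=
  ∃ (π : Type) (E : RegularExpression π) (f : π → List γ),
    (rchars E).Nodup ∧
    kBD (glushkov E.matches' f) k ∧
    L = {w | ∃ ws ∈ E.matches', (ws.map f).flatten = w}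

/-- A language is `k`-lookahead deterministic if specified by a regular expression
whose Glushkov automaton is `k`-lookahead deterministic. -/
def IsKLookaheadDet {γ : Type} (L : Set (List γ)) (k : ℕ) : Prop :=
  ∃ (π : Type) (E : RegularExpression π) (f : π → γ),
    (rchars E).Nodup ∧
    kLA (glushkov E.matches' f) k ∧
    L = {w | ∃ ws ∈ E.matches', ws.map f = w}

/-- A language is one-unambiguous if specified by a regular expression with
deterministic Glushkov automaton. -/
def IsOneUnambiguous {γ : Type} (L : Set (List γ)) : Prop :=
  ∃ (π : Type) (E : RegularExpression π) (f : π → γ),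
    (rchars E).Nodup ∧
    Det (glushkov E.matches' f) ∧
    L = {w | ∃ ws ∈ E.matches', ws.map f = w}

/-- Reachability in an automaton. -/
def Reach {β σ : Type*} (A : NFA β σ) (p q : σ) : Prop := ∃ w, q ∈ A.evalFrom {p} w

/-- `O` is an orbit (strongly connected component) of `A`. -/
def IsOrbit {β σ : Type*} (A : NFA β σ) (O : Set σ) : Prop :=
  ∃ q, O = {p | Reach A p q ∧ Reach A q p}

/-- A non-trivial orbit: one containing a cycle. -/
def NonTrivial {β σ : Type*} (A : NFA β σ) (O : Set σ) : Prop :=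
  ∃ p ∈ O, ∃ w : List β, w ≠ [] ∧ p ∈ A.evalFrom {p} w

/-- In-gate of an orbit. -/
def InGate {β σ : Type*} (A : NFA β σ) (O : Set σ) (q : σ) : Prop :=
  q ∈ O ∧ (q ∈ A.start ∨ ∃ p ∉ O, ∃ b, q ∈ A.step p b)

/-- Out-gate of an orbit. -/
def OutGate {β σ : Type*} (A : NFA β σ) (O : Set σ) (q : σ) : Prop :=
  q ∈ O ∧ (q ∈ A.accept ∨ ∃ p ∉ O, ∃ b, p ∈ A.step q b)

end BD

namespace BD

/-- `A` is trimmed. -/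
def Trimmed {β σ : Type*} (A : NFA β σ) : Prop :=
  ∀ q : σ, (∃ w, q ∈ A.evalFrom A.start w) ∧
    (∃ w, (A.evalFrom {q} w ∩ A.accept).Nonempty)

open Computability

variable {π : Type*}

/-- Follow-graph edge. -/
def Edge (L : Set (List π)) (x y : π) : Prop := y ∈ LFollow L x

/-- Follow-graph reachability. -/
def Conn (L : Set (List π)) : π → π → Prop := Relation.ReflTransGen (Edge L)

lemma Edge.mono {L L' : Set (List π)} (h : L ⊆ L') {x y : π} (e : Edge L x y) : Edge L' x y := by
  obtain ⟨u, v, huv⟩ := e; exact ⟨u, v, h huv⟩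

lemma Conn.mono {L L' : Set (List π)} (h : L ⊆ L') {x y : π} (c : Conn L x y) : Conn L' x y :=
  Relation.ReflTransGen.mono (r := Edge L) (p := Edge L') (fun _ _ e => e.mono h) _ _ c

lemma mem_rchars : ∀ {E : RegularExpression π} {w : List π}, w ∈ E.matches' →
    ∀ {x : π}, x ∈ w → x ∈ rchars E := by
  intro E
  induction E with
  | zero => intro w hw; exact absurd hw (Language.notMem_zero w)
  | epsilon => intro w hw x hx
               have hw' : w = [] := Language.mem_one w |>.mp hw
               subst hw'; simp at hx
  | char a => intro w hw x hx
              have hw' : w = [a] := hw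
              subst hw'; simpa [rchars] using hx
  | plus p q ihp ihq =>
      intro w hw x hx
      have hw' : w ∈ p.matches' + q.matches' := hw
      rcases (Language.mem_add _ _ _).1 hw' with hw2 | hw2
      · exact List.mem_append_left _ (ihp hw2 hx)
      · exact List.mem_append_right _ (ihq hw2 hx)
  | comp p q ihp ihq =>
      intro w hw x hx
      have hw' : w ∈ p.matches' * q.matches' := hw
      obtain ⟨a, ha, b, hb, rfl⟩ := Language.mem_mul.1 hw'
      rcases List.mem_append.1 hx with h | h
      · exact List.mem_append_left _ (ihp ha h)
      · exact List.mem_append_right _ (ihq hb h)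
  | star p ih =>
      intro w hw x hx
      rw [RegularExpression.matches'_star] at hw
      obtain ⟨S, rfl, hS⟩ := Language.mem_kstar.1 hw
      obtain ⟨l, hl, hxl⟩ := List.mem_flatten.1 hx
      exact ih (hS l hl) hxl


lemma first_of_flatten {L₁ : Set (List π)} :
    ∀ {S : List (List π)}, (∀ p ∈ S, p ∈ L₁) → ∀ {y : π} {v : List π},
      S.flatten = y :: v → y ∈ LFirst L₁ := by
  intro S
  induction S with
  | nil => intro _ y v h; simp at h
  | cons a S ih =>
      intro hS y v h
      cases a with
      | nil => exact ih (fun p hp => hS p (List.mem_cons_of_mem _ hp)) (by simpa using h)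
      | cons b t =>
          have hb : b = y := by simpa using congrArg List.head? h
          subst hb
          exact ⟨t, hS _ List.mem_cons_self⟩

lemma concat_eq_concat_last {a w : List π} {l z : π} (h : a ++ [l] = w ++ [z]) : l = z := by
  have := congrArg List.getLast? h
  simpa using this

lemma last_of_flatten {L₁ : Set (List π)} :
    ∀ {S : List (List π)}, (∀ p ∈ S, p ∈ L₁) → ∀ {z : π} {w : List π},
      S.flatten = w ++ [z] → z ∈ LLast L₁ := by
  intro S
  induction S using List.reverseRecOn with
  | nil => intro _ z w h; simp at h
  | append_singleton S a ih =>
      intro hS z w h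
      rw [List.flatten_append, List.flatten_cons, List.flatten_nil, List.append_nil] at h
      rcases List.eq_nil_or_concat' a with rfl | ⟨t, l, rfl⟩
      · rw [List.append_nil] at h
        exact ih (fun p hp => hS p (List.mem_append_left _ hp)) h
      · rw [← List.append_assoc] at h
        have hlz : l = z := concat_eq_concat_last h
        subst hlz
        exact ⟨t, hS _ (List.mem_append_right _ (by simp))⟩

lemma star_edge {L₁ : Set (List π)} {z y : π} (hz : z ∈ LLast L₁) (hy : y ∈ LFirst L₁) :
    Edge (L₁∗ : Language π) z y := by
  obtain ⟨u, hu⟩ := hz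
  obtain ⟨v, hv⟩ := hy
  refine ⟨u, v, ?_⟩
  have : (u ++ [z]) ++ (y :: v) ∈ (L₁∗ : Language π) := by
    exact Language.mem_kstar.2 ⟨[u ++ [z], y :: v], by simp, by
      rintro p hp; simp at hp; rcases hp with rfl | rfl
      · exact hu
      · exact hv⟩
  simp at this; exact this

lemma pair_split_star {L₁ : Set (List π)} {x y : π} {v : List π} :
    ∀ {S : List (List π)}, (∀ p ∈ S, p ∈ L₁) → ∀ {u : List π},
      S.flatten = u ++ x :: y :: v →
      (∃ u' v', u' ++ x :: y :: v' ∈ L₁) ∨ (x ∈ LLast L₁ ∧ y ∈ LFirst L₁) := by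
  intro S
  induction S with
  | nil => intro _ u h; simp at h
  | cons a S ih =>
      intro hS u h
      rw [List.flatten_cons] at h
      rcases List.append_eq_append_iff.1 h with ⟨a', _, ha2⟩ | ⟨c', hc1, hc2⟩
      · exact ih (fun p hp => hS p (List.mem_cons_of_mem _ hp)) ha2
      · cases c' with
        | nil =>
            exact ih (fun p hp => hS p (List.mem_cons_of_mem _ hp))
              (u := []) (by simpa using hc2.symm)
        | cons x' c'' =>
            have hx : x = x' := by simpa using congrArg List.head? hc2
            subst hx
            cases c'' with
            | nil =>
                have h1 : x ∈ LLast L₁ := ⟨u, by rw [← hc1]; exact hS _ List.mem_cons_self⟩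
                have h2 : S.flatten = y :: v := by simpa using hc2.symm
                exact Or.inr ⟨h1, first_of_flatten
                  (fun p hp => hS p (List.mem_cons_of_mem _ hp)) h2⟩
            | cons y' v'' =>
                have hy : y = y' := by
                  have := congrArg List.tail hc2
                  simpa using congrArg List.head? this
                subst hy
                refine Or.inl ⟨u, v'', ?_⟩
                rw [← hc1]; exact hS _ List.mem_cons_self

lemma conn_to_last {L : Set (List π)} :
    ∀ {v : List π} {u : List π} {x : π}, u ++ x :: v ∈ L →
      ∃ e, e ∈ LLast L ∧ Conn L x e := by
  intro v
  induction v with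
  | nil => intro u x h; exact ⟨x, ⟨u, h⟩, Relation.ReflTransGen.refl⟩
  | cons b v ih =>
      intro u x h
      have e1 : Edge L x b := ⟨u, v, h⟩
      obtain ⟨e, he, hc⟩ := ih (u := u ++ [x]) (x := b) (by simpa using h)
      exact ⟨e, he, Relation.ReflTransGen.head e1 hc⟩

lemma conn_from_first {L : Set (List π)} :
    ∀ {u : List π} {x : π} {v : List π}, u ++ x :: v ∈ L →
      ∃ f, f ∈ LFirst L ∧ Conn L f x := by
  intro u
  induction u using List.reverseRecOn with
  | nil => intro x v h; exact ⟨x, ⟨v, h⟩, Relation.ReflTransGen.refl⟩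
  | append_singleton u a ih =>
      intro x v h
      rw [List.append_assoc] at h
      have e1 : Edge L a x := ⟨u, v, by simpa using h⟩
      obtain ⟨f, hf, hc⟩ := ih (x := a) (v := x :: v) (by simpa using h)
      exact ⟨f, hf, hc.tail e1⟩


lemma mem_kstar_self {L₁ : Set (List π)} {w : List π} (h : w ∈ L₁) : w ∈ (L₁∗ : Language π) :=
  Language.mem_kstar.2 ⟨[w], by simp, by intro y hy; rw [List.mem_singleton] at hy; subst hy; exact h⟩

/-- The orbit property at the language level. -/
def OPP (L : Set (List π)) : Prop :=
  ∀ (q : π) (O : Set π), O = {p | Conn L p q ∧ Conn L q p} →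
    (∃ p ∈ O, Relation.TransGen (Edge L) p p) →
    ∀ z y, z ∈ O → y ∈ O →
    (z ∈ LLast L ∨ ∃ w, w ∉ O ∧ Edge L z w) →
    (y ∈ LFirst L ∨ ∃ s, s ∉ O ∧ Edge L s y) →
    Edge L z y

lemma opp_star (L₁ : Set (List π)) : OPP (L₁∗ : Language π) := by
  intro q O hO _hNT z y hz hy hzOut hyIn
  set L : Set (List π) := (L₁∗ : Language π) with hLdef
  have hsub : L₁ ⊆ L := fun w h => mem_kstar_self h
  have hOmem : ∀ p, p ∈ O ↔ (Conn L p q ∧ Conn L q p) := by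
    intro p; rw [hO]; exact Iff.rfl
  have hzq := (hOmem z).1 hz
  have hyq := (hOmem y).1 hy
  have hzLast : z ∈ LLast L₁ := by
    rcases hzOut with hzL | ⟨w', hw'O, hEdge⟩
    · obtain ⟨w, hw⟩ := hzL
      obtain ⟨S, hflat, hSmem⟩ := Language.mem_kstar.1 hw
      exact last_of_flatten hSmem hflat.symm
    · obtain ⟨u, v, huv⟩ := hEdge
      obtain ⟨S, hflat, hSmem⟩ := Language.mem_kstar.1 huv
      rcases pair_split_star hSmem hflat.symm with ⟨u₁, v₁, h₁⟩ | ⟨h1, _⟩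
      · exfalso; apply hw'O
        obtain ⟨e, he, hce⟩ := conn_to_last (v := v₁) (u := u₁ ++ [z]) (x := w')
          (by simpa using h₁)
        obtain ⟨f, hf, hcf⟩ := conn_from_first (u := u₁) (x := z) (v := w' :: v₁) h₁
        have hconn : Conn L w' z :=
          (hce.mono hsub).trans (Relation.ReflTransGen.head (star_edge he hf) (hcf.mono hsub))
        exact (hOmem w').2 ⟨hconn.trans hzq.1,
          hzq.2.trans (Relation.ReflTransGen.single ⟨u, v, huv⟩)⟩
      · exact h1
  have hyFirst : y ∈ LFirst L₁ := by
    rcases hyIn with hyF | ⟨s, hsO, hEdge⟩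
    · obtain ⟨v, hv⟩ := hyF
      obtain ⟨S, hflat, hSmem⟩ := Language.mem_kstar.1 hv
      exact first_of_flatten hSmem hflat.symm
    · obtain ⟨u, v, huv⟩ := hEdge
      obtain ⟨S, hflat, hSmem⟩ := Language.mem_kstar.1 huv
      rcases pair_split_star hSmem hflat.symm with ⟨u₁, v₁, h₁⟩ | ⟨_, h2⟩
      · exfalso; apply hsO
        obtain ⟨e, he, hce⟩ := conn_to_last (v := v₁) (u := u₁ ++ [s]) (x := y)
          (by simpa using h₁)
        obtain ⟨f, hf, hcf⟩ := conn_from_first (u := u₁) (x := s) (v := y :: v₁) h₁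
        have hconn : Conn L y s :=
          (hce.mono hsub).trans (Relation.ReflTransGen.head (star_edge he hf) (hcf.mono hsub))
        exact (hOmem s).2 ⟨(Relation.ReflTransGen.single (⟨u, v, huv⟩ : Edge L s y)).trans hyq.1,
          hyq.2.trans hconn⟩
      · exact h2
  exact star_edge hzLast hyFirst


section union
variable {L₁ L₂ : Set (List π)} {P₁ P₂ : Set π}

lemma conn_forward {L : Set (List π)} {P : Set π}
    (hstep : ∀ {a c}, Edge L a c → a ∈ P → c ∈ P) :
    ∀ {a b}, Conn L a b → a ∈ P → b ∈ P := by
  intro a b h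
  induction h with
  | refl => exact id
  | tail _ e ih => exact fun ha => hstep e (ih ha)

lemma conn_backward {L : Set (List π)} {P : Set π}
    (hstep : ∀ {a c}, Edge L a c → c ∈ P → a ∈ P) :
    ∀ {a b}, Conn L a b → b ∈ P → a ∈ P := by
  intro a b h
  induction h with
  | refl => exact id
  | tail _ e ih => exact fun hb => ih (hstep e hb)

lemma conn_restrict {L L' : Set (List π)} {q : π} {O : Set π}
    (hO : O = {p | Conn L p q ∧ Conn L q p})
    (hedge : ∀ {a c}, a ∈ O → c ∈ O → Edge L a c → Edge L' a c) :
    ∀ {a b}, a ∈ O → b ∈ O → Conn L a b → Conn L' a b := by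
  have habs : ∀ {a b c}, a ∈ O → b ∈ O → Conn L a c → Conn L c b → c ∈ O := by
    intro a b c ha hb h1 h2
    rw [hO] at ha hb ⊢
    exact ⟨h2.trans hb.1, ha.2.trans h1⟩
  intro a b ha hb h
  revert ha
  induction h using Relation.ReflTransGen.head_induction_on with
  | refl => intro _; exact Relation.ReflTransGen.refl
  | head e hcb ih =>
      intro ha
      have hc := habs ha hb (Relation.ReflTransGen.single e) hcb
      exact Relation.ReflTransGen.head (hedge ha hc e) (ih hc)

lemma transGen_restrict {L L' : Set (List π)} {q : π} {O : Set π}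
    (hO : O = {p | Conn L p q ∧ Conn L q p})
    (hedge : ∀ {a c}, a ∈ O → c ∈ O → Edge L a c → Edge L' a c)
    {p₀ : π} (hp₀ : p₀ ∈ O) (h : Relation.TransGen (Edge L) p₀ p₀) :
    Relation.TransGen (Edge L') p₀ p₀ := by
  obtain ⟨c, e, hcb⟩ := Relation.TransGen.head'_iff.1 h
  have hc : c ∈ O := by
    rw [hO] at hp₀ ⊢
    exact ⟨hcb.trans hp₀.1, hp₀.2.trans (Relation.ReflTransGen.single e)⟩
  exact Relation.TransGen.head' (hedge hp₀ hc e) (conn_restrict hO hedge hc hp₀ hcb)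

lemma opp_union_side
    (hp₁ : ∀ {w : List π}, w ∈ L₁ → ∀ {x}, x ∈ w → x ∈ P₁)
    (hp₂ : ∀ {w : List π}, w ∈ L₂ → ∀ {x}, x ∈ w → x ∈ P₂)
    (hdisj : ∀ a, a ∈ P₁ → a ∈ P₂ → False)
    (h1 : OPP L₁)
    (q : π) (O : Set π) (hO : O = {p | Conn (L₁ ∪ L₂) p q ∧ Conn (L₁ ∪ L₂) q p})
    (hNT : ∃ p ∈ O, Relation.TransGen (Edge (L₁ ∪ L₂)) p p)
    (hq1 : q ∈ P₁) :
    ∀ z y, z ∈ O → y ∈ O →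
    (z ∈ LLast (L₁ ∪ L₂) ∨ ∃ w, w ∉ O ∧ Edge (L₁ ∪ L₂) z w) →
    (y ∈ LFirst (L₁ ∪ L₂) ∨ ∃ s, s ∉ O ∧ Edge (L₁ ∪ L₂) s y) →
    Edge (L₁ ∪ L₂) z y := by
  intro z y hz hy hzOut hyIn
  set L : Set (List π) := L₁ ∪ L₂ with hLdef
  have hedge1 : ∀ {a c}, Edge L a c → a ∈ P₁ → Edge L₁ a c ∧ c ∈ P₁ := by
    rintro a c ⟨u, v, huv⟩ haP
    rcases huv with h | h
    · exact ⟨⟨u, v, h⟩, hp₁ h (by simp)⟩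
    · exact absurd (hp₂ h (by simp)) (fun h2 => hdisj a haP h2)
  have hP : ∀ {p}, p ∈ O → p ∈ P₁ := by
    intro p hp
    rw [hO] at hp
    exact conn_forward (fun e ha => (hedge1 e ha).2) hp.2 hq1
  have hedgeO : ∀ {a c}, a ∈ O → c ∈ O → Edge L a c → Edge L₁ a c :=
    fun ha _ e => (hedge1 e (hP ha)).1
  have hqO : q ∈ O := by rw [hO]; exact ⟨Relation.ReflTransGen.refl, Relation.ReflTransGen.refl⟩
  have hsub : L₁ ⊆ L := Set.subset_union_left
  have hO1 : O = {p | Conn L₁ p q ∧ Conn L₁ q p} := by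
    ext p
    constructor
    · intro hp
      have hp' := hp; rw [hO] at hp'
      exact ⟨conn_restrict hO hedgeO hp hqO hp'.1, conn_restrict hO hedgeO hqO hp hp'.2⟩
    · intro hp
      rw [hO]
      exact ⟨hp.1.mono hsub, hp.2.mono hsub⟩
  have hNT1 : ∃ p ∈ O, Relation.TransGen (Edge L₁) p p := by
    obtain ⟨p₀, hp₀, hcyc⟩ := hNT
    exact ⟨p₀, hp₀, transGen_restrict hO hedgeO hp₀ hcyc⟩
  have hzOut' : z ∈ LLast L₁ ∨ ∃ w, w ∉ O ∧ Edge L₁ z w := by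
    rcases hzOut with ⟨w, hw⟩ | ⟨w', hw'O, e⟩
    · rcases hw with h | h
      · exact Or.inl ⟨w, h⟩
      · exact absurd (hp₂ h (by simp)) (fun h2 => hdisj z (hP hz) h2)
    · exact Or.inr ⟨w', hw'O, (hedge1 e (hP hz)).1⟩
  have hyIn' : y ∈ LFirst L₁ ∨ ∃ s, s ∉ O ∧ Edge L₁ s y := by
    rcases hyIn with ⟨v, hv⟩ | ⟨s, hsO, e⟩
    · rcases hv with h | h
      · exact Or.inl ⟨v, h⟩
      · exact absurd (hp₂ h (by simp)) (fun h2 => hdisj y (hP hy) h2)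
    · obtain ⟨u, v, huv⟩ := e
      rcases huv with h | h
      · exact Or.inr ⟨s, hsO, ⟨u, v, h⟩⟩
      · exact absurd (hp₂ h (by simp)) (fun h2 => hdisj y (hP hy) h2)
  exact (h1 q O hO1 hNT1 z y hz hy hzOut' hyIn').mono hsub

end union


lemma opp_union
    {L₁ L₂ : Set (List π)} {P₁ P₂ : Set π}
    (hp₁ : ∀ {w : List π}, w ∈ L₁ → ∀ {x}, x ∈ w → x ∈ P₁)
    (hp₂ : ∀ {w : List π}, w ∈ L₂ → ∀ {x}, x ∈ w → x ∈ P₂)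
    (hdisj : ∀ a, a ∈ P₁ → a ∈ P₂ → False)
    (h1 : OPP L₁) (h2 : OPP L₂) : OPP (L₁ ∪ L₂) := by
  intro q O hO hNT z y hz hy hzOut hyIn
  obtain ⟨p₀, hp₀, hcyc⟩ := hNT
  have hqp : Conn (L₁ ∪ L₂) q p₀ := by
    have := hp₀; rw [hO] at this; exact this.2
  have hedgeq : ∃ c, Edge (L₁ ∪ L₂) q c := by
    rcases hqp.cases_head with rfl | ⟨c, e, _⟩
    · obtain ⟨c, e, _⟩ := Relation.TransGen.head'_iff.1 hcyc; exact ⟨c, e⟩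
    · exact ⟨c, e⟩
  obtain ⟨c, u, v, huv⟩ := hedgeq
  rcases huv with h | h
  · exact opp_union_side hp₁ hp₂ hdisj h1 q O hO ⟨p₀, hp₀, hcyc⟩
      (hp₁ h (by simp)) z y hz hy hzOut hyIn
  · rw [Set.union_comm L₁ L₂] at hO hzOut hyIn ⊢
    have hcyc' : Relation.TransGen (Edge (L₂ ∪ L₁)) p₀ p₀ := by
      rw [Set.union_comm L₂ L₁]; exact hcyc
    exact opp_union_side hp₂ hp₁ (fun a ha hb => hdisj a hb ha) h2 q O hO
      ⟨p₀, hp₀, hcyc'⟩ (hp₂ h (by simp)) z y hz hy hzOut hyIn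

lemma pair_split_mul {L₁ L₂ : Language π} {x y : π} {u v : List π}
    (h : u ++ x :: y :: v ∈ (L₁ * L₂ : Language π)) :
    (∃ u' v', u' ++ x :: y :: v' ∈ L₁) ∨ (x ∈ LLast L₁ ∧ y ∈ LFirst L₂) ∨
      (∃ u' v', u' ++ x :: y :: v' ∈ L₂) := by
  obtain ⟨a, ha, b, hb, hab⟩ := Language.mem_mul.1 h
  rcases List.append_eq_append_iff.1 hab with ⟨a', _, hb2⟩ | ⟨c', ha2, hd⟩
  · exact Or.inr (Or.inr ⟨a', v, by rw [← hb2]; exact hb⟩)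
  · cases c' with
    | nil =>
        simp only [List.nil_append] at hd
        exact Or.inr (Or.inr ⟨[], v, by simpa [← hd] using hb⟩)
    | cons x' c'' =>
        rw [List.cons_append] at hd
        injection hd with h1 h2
        subst h1
        cases c'' with
        | nil =>
            simp only [List.nil_append] at h2
            refine Or.inr (Or.inl ⟨⟨u, by rw [← ha2]; exact ha⟩, ⟨v, by rw [h2]; exact hb⟩⟩)
        | cons y' v'' =>
            rw [List.cons_append] at h2
            injection h2 with h3 h4
            subst h3
            exact Or.inl ⟨u, v'', by rw [← ha2]; exact ha⟩

lemma concat_of_append_concat {a b w : List π} {z : π} (hb : b ≠ [])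
    (h : a ++ b = w ++ [z]) : ∃ b', b = b' ++ [z] := by
  rcases List.eq_nil_or_concat' b with rfl | ⟨t, l, rfl⟩
  · exact absurd rfl hb
  · rw [← List.append_assoc] at h
    exact ⟨t, by rw [concat_eq_concat_last h]⟩

lemma opp_mul
    {L₁ L₂ : Language π} {P₁ P₂ : Set π}
    (hp₁ : ∀ {w : List π}, w ∈ L₁ → ∀ {x}, x ∈ w → x ∈ P₁)
    (hp₂ : ∀ {w : List π}, w ∈ L₂ → ∀ {x}, x ∈ w → x ∈ P₂)
    (hdisj : ∀ a, a ∈ P₁ → a ∈ P₂ → False)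
    (h1 : OPP L₁) (h2 : OPP L₂) : OPP (L₁ * L₂ : Language π) := by
  intro q O hO hNT z y hz hy hzOut hyIn
  set L : Set (List π) := (L₁ * L₂ : Language π) with hLdef
  obtain ⟨p₀, hp₀, hcyc⟩ := hNT
  -- some word of L and nonemptiness of L₁ and L₂
  obtain ⟨c₀, e₀, _⟩ := Relation.TransGen.head'_iff.1 hcyc
  obtain ⟨u₀, v₀, hW⟩ := e₀
  obtain ⟨a₀, ha₀, b₀, hb₀, hab₀⟩ := Language.mem_mul.1 hW
  have esplit : ∀ {a c : π}, Edge L a c →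
      ((∃ u' v', u' ++ a :: c :: v' ∈ L₁) ∨ (a ∈ LLast L₁ ∧ c ∈ LFirst L₂) ∨
        (∃ u' v', u' ++ a :: c :: v' ∈ L₂)) := by
    rintro a c ⟨u', v', h'⟩
    exact pair_split_mul h'
  have hsubL₁ : ∀ {x' y' : π}, Edge L₁ x' y' → Edge L x' y' := by
    rintro x' y' ⟨u', v', h'⟩
    exact ⟨u', v' ++ b₀, by
      have : (u' ++ x' :: y' :: v') ++ b₀ ∈ L := Language.append_mem_mul h' hb₀
      simpa using this⟩
  have hsubL₂ : ∀ {x' y' : π}, Edge L₂ x' y' → Edge L x' y' := by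
    rintro x' y' ⟨u', v', h'⟩
    exact ⟨a₀ ++ u', v', by
      have : a₀ ++ (u' ++ x' :: y' :: v') ∈ L := Language.append_mem_mul ha₀ h'
      simpa using this⟩
  have hqO : q ∈ O := by
    rw [hO]; exact ⟨Relation.ReflTransGen.refl, Relation.ReflTransGen.refl⟩
  -- determine the side of q
  have hqp : Conn L q p₀ := by
    have := hp₀; rw [hO] at this; exact this.2
  have hedgeq : ∃ c, Edge L q c := by
    rcases hqp.cases_head with rfl | ⟨c, e, _⟩
    · obtain ⟨c, e, _⟩ := Relation.TransGen.head'_iff.1 hcyc; exact ⟨c, e⟩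
    · exact ⟨c, e⟩
  have hqside : q ∈ P₁ ∨ q ∈ P₂ := by
    obtain ⟨c, u', v', h'⟩ := hedgeq
    obtain ⟨a, ha, b, hb, hab⟩ := Language.mem_mul.1 h'
    have : q ∈ a ++ b := by rw [hab]; simp
    rcases List.mem_append.1 this with h | h
    · exact Or.inl (hp₁ ha h)
    · exact Or.inr (hp₂ hb h)
  rcases hqside with hq1 | hq2
  · -- q (and hence O) lies in the positions of L₁
    have hstepB : ∀ {b c : π}, Edge L b c → c ∈ P₁ → b ∈ P₁ := by
      intro b c e hc
      rcases esplit e with ⟨u', v', h'⟩ | ⟨_, hcf⟩ | ⟨u', v', h'⟩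
      · exact hp₁ h' (by simp)
      · obtain ⟨vf, hvf⟩ := hcf
        exact absurd (hp₂ hvf (by simp)) (fun hh => hdisj c hc hh)
      · exact absurd (hp₂ h' (by simp)) (fun hh => hdisj c hc hh)
    have hP : ∀ {p}, p ∈ O → p ∈ P₁ := by
      intro p hp
      have hp' := hp; rw [hO] at hp'
      exact conn_backward (fun e hc => hstepB e hc) hp'.1 hq1
    have hedgeO : ∀ {a c}, a ∈ O → c ∈ O → Edge L a c → Edge L₁ a c := by
      intro a c ha hc e
      rcases esplit e with ⟨u', v', h'⟩ | ⟨_, hcf⟩ | ⟨u', v', h'⟩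
      · exact ⟨u', v', h'⟩
      · obtain ⟨vf, hvf⟩ := hcf
        exact absurd (hp₂ hvf (by simp)) (fun hh => hdisj c (hP hc) hh)
      · exact absurd (hp₂ h' (by simp)) (fun hh => hdisj c (hP hc) hh)
    have hO1 : O = {p | Conn L₁ p q ∧ Conn L₁ q p} := by
      ext p
      constructor
      · intro hp
        have hp' := hp; rw [hO] at hp'
        exact ⟨conn_restrict hO hedgeO hp hqO hp'.1, conn_restrict hO hedgeO hqO hp hp'.2⟩
      · intro hp
        rw [hO]
        exact ⟨Relation.ReflTransGen.mono (r := Edge L₁) (p := Edge L) (fun _ _ e => hsubL₁ e) _ _ hp.1,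
               Relation.ReflTransGen.mono (r := Edge L₁) (p := Edge L) (fun _ _ e => hsubL₁ e) _ _ hp.2⟩
    have hNT1 : ∃ p ∈ O, Relation.TransGen (Edge L₁) p p :=
      ⟨p₀, hp₀, transGen_restrict hO hedgeO hp₀ hcyc⟩
    have hzOut' : z ∈ LLast L₁ ∨ ∃ w, w ∉ O ∧ Edge L₁ z w := by
      rcases hzOut with ⟨w, hw⟩ | ⟨w', hw'O, e⟩
      · obtain ⟨a, ha, b, hb, hab⟩ := Language.mem_mul.1 hw
        by_cases hbnil : b = []
        · subst hbnil
          rw [List.append_nil] at hab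
          exact Or.inl ⟨w, by rw [← hab]; exact ha⟩
        · obtain ⟨b', rfl⟩ := concat_of_append_concat hbnil hab
          exact absurd (hp₂ hb (by simp)) (fun hh => hdisj z (hP hz) hh)
      · rcases esplit e with ⟨u', v', h'⟩ | ⟨hzl, _⟩ | ⟨u', v', h'⟩
        · exact Or.inr ⟨w', hw'O, ⟨u', v', h'⟩⟩
        · exact Or.inl hzl
        · exact absurd (hp₂ h' (by simp)) (fun hh => hdisj z (hP hz) hh)
    have hyIn' : y ∈ LFirst L₁ ∨ ∃ s, s ∉ O ∧ Edge L₁ s y := by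
      rcases hyIn with ⟨v, hv⟩ | ⟨s, hsO, e⟩
      · obtain ⟨a, ha, b, hb, hab⟩ := Language.mem_mul.1 hv
        cases a with
        | nil =>
            simp only [List.nil_append] at hab
            exact absurd (hp₂ hb (by rw [hab]; simp)) (fun hh => hdisj y (hP hy) hh)
        | cons a₁ a' =>
            have h1 : a₁ = y := by simpa using congrArg List.head? hab
            exact Or.inl ⟨a', h1 ▸ ha⟩
      · rcases esplit e with ⟨u', v', h'⟩ | ⟨_, hyf⟩ | ⟨u', v', h'⟩
        · exact Or.inr ⟨s, hsO, ⟨u', v', h'⟩⟩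
        · obtain ⟨vf, hvf⟩ := hyf
          exact absurd (hp₂ hvf (by simp)) (fun hh => hdisj y (hP hy) hh)
        · exact absurd (hp₂ h' (by simp)) (fun hh => hdisj y (hP hy) hh)
    exact hsubL₁ (h1 q O hO1 hNT1 z y hz hy hzOut' hyIn')
  · -- q (and hence O) lies in the positions of L₂
    have hstepF : ∀ {a c : π}, Edge L a c → a ∈ P₂ → Edge L₂ a c ∧ c ∈ P₂ := by
      intro a c e ha
      rcases esplit e with ⟨u', v', h'⟩ | ⟨haf, _⟩ | ⟨u', v', h'⟩
      · exact absurd (hp₁ h' (by simp)) (fun hh => hdisj a hh ha)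
      · obtain ⟨vf, hvf⟩ := haf
        exact absurd (hp₁ hvf (by simp)) (fun hh => hdisj a hh ha)
      · exact ⟨⟨u', v', h'⟩, hp₂ h' (by simp)⟩
    have hP : ∀ {p}, p ∈ O → p ∈ P₂ := by
      intro p hp
      have hp' := hp; rw [hO] at hp'
      exact conn_forward (fun e ha => (hstepF e ha).2) hp'.2 hq2
    have hedgeO : ∀ {a c}, a ∈ O → c ∈ O → Edge L a c → Edge L₂ a c :=
      fun ha _ e => (hstepF e (hP ha)).1
    have hO2 : O = {p | Conn L₂ p q ∧ Conn L₂ q p} := by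
      ext p
      constructor
      · intro hp
        have hp' := hp; rw [hO] at hp'
        exact ⟨conn_restrict hO hedgeO hp hqO hp'.1, conn_restrict hO hedgeO hqO hp hp'.2⟩
      · intro hp
        rw [hO]
        exact ⟨Relation.ReflTransGen.mono (r := Edge L₂) (p := Edge L) (fun _ _ e => hsubL₂ e) _ _ hp.1,
               Relation.ReflTransGen.mono (r := Edge L₂) (p := Edge L) (fun _ _ e => hsubL₂ e) _ _ hp.2⟩
    have hNT2 : ∃ p ∈ O, Relation.TransGen (Edge L₂) p p :=
      ⟨p₀, hp₀, transGen_restrict hO hedgeO hp₀ hcyc⟩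
    have hzOut' : z ∈ LLast L₂ ∨ ∃ w, w ∉ O ∧ Edge L₂ z w := by
      rcases hzOut with ⟨w, hw⟩ | ⟨w', hw'O, e⟩
      · obtain ⟨a, ha, b, hb, hab⟩ := Language.mem_mul.1 hw
        by_cases hbnil : b = []
        · subst hbnil
          rw [List.append_nil] at hab
          exact absurd (hp₁ ha (by rw [hab]; simp)) (fun hh => hdisj z hh (hP hz))
        · obtain ⟨b', rfl⟩ := concat_of_append_concat hbnil hab
          exact Or.inl ⟨b', hb⟩
      · rcases esplit e with ⟨u', v', h'⟩ | ⟨hzl, _⟩ | ⟨u', v', h'⟩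
        · exact absurd (hp₁ h' (by simp)) (fun hh => hdisj z hh (hP hz))
        · obtain ⟨vf, hvf⟩ := hzl
          exact absurd (hp₁ hvf (by simp)) (fun hh => hdisj z hh (hP hz))
        · exact Or.inr ⟨w', hw'O, ⟨u', v', h'⟩⟩
    have hyIn' : y ∈ LFirst L₂ ∨ ∃ s, s ∉ O ∧ Edge L₂ s y := by
      rcases hyIn with ⟨v, hv⟩ | ⟨s, hsO, e⟩
      · obtain ⟨a, ha, b, hb, hab⟩ := Language.mem_mul.1 hv
        cases a with
        | nil =>
            simp only [List.nil_append] at hab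
            exact Or.inl ⟨v, by rw [← hab]; exact hb⟩
        | cons a₁ a' =>
            have h1 : a₁ = y := by simpa using congrArg List.head? hab
            exact absurd (hp₁ ha (by simp [h1])) (fun hh => hdisj y hh (hP hy))
      · rcases esplit e with ⟨u', v', h'⟩ | ⟨_, hyf⟩ | ⟨u', v', h'⟩
        · exact absurd (hp₁ h' (by simp)) (fun hh => hdisj y hh (hP hy))
        · exact Or.inl hyf
        · exact Or.inr ⟨s, hsO, ⟨u', v', h'⟩⟩
    exact hsubL₂ (h2 q O hO2 hNT2 z y hz hy hzOut' hyIn')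


theorem opp_matches : ∀ (E : RegularExpression π), (rchars E).Nodup →
    OPP (E.matches' : Set (List π)) := by
  intro E
  induction E with
  | zero =>
      intro _ q O hO hNT z y hz hy hzOut hyIn
      exfalso
      obtain ⟨p₀, hp₀, hcyc⟩ := hNT
      obtain ⟨c, e, _⟩ := Relation.TransGen.head'_iff.1 hcyc
      obtain ⟨u, v, huv⟩ := e
      exact Language.notMem_zero _ huv
  | epsilon =>
      intro _ q O hO hNT z y hz hy hzOut hyIn
      exfalso
      obtain ⟨p₀, hp₀, hcyc⟩ := hNT
      obtain ⟨c, e, _⟩ := Relation.TransGen.head'_iff.1 hcyc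
      obtain ⟨u, v, huv⟩ := e
      have : u ++ p₀ :: c :: v = [] := (Language.mem_one _).1 huv
      simp at this
  | char a =>
      intro _ q O hO hNT z y hz hy hzOut hyIn
      exfalso
      obtain ⟨p₀, hp₀, hcyc⟩ := hNT
      obtain ⟨c, e, _⟩ := Relation.TransGen.head'_iff.1 hcyc
      obtain ⟨u, v, huv⟩ := e
      have : u ++ p₀ :: c :: v = [a] := huv
      have hl := congrArg List.length this
      simp at hl
      omega
  | plus p q ihp ihq =>
      intro hnd
      have hnd' : (rchars p ++ rchars q).Nodup := hnd
      obtain ⟨h1, h2, hdis⟩ := List.nodup_append.1 hnd'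
      exact opp_union (P₁ := {x | x ∈ rchars p}) (P₂ := {x | x ∈ rchars q})
        (fun {w} hw {x} hx => mem_rchars hw hx) (fun {w} hw {x} hx => mem_rchars hw hx)
        (fun a ha hb => hdis a ha a hb rfl) (ihp h1) (ihq h2)
  | comp p q ihp ihq =>
      intro hnd
      have hnd' : (rchars p ++ rchars q).Nodup := hnd
      obtain ⟨h1, h2, hdis⟩ := List.nodup_append.1 hnd'
      exact opp_mul (P₁ := {x | x ∈ rchars p}) (P₂ := {x | x ∈ rchars q})
        (fun {w} hw {x} hx => mem_rchars hw hx) (fun {w} hw {x} hx => mem_rchars hw hx)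
        (fun a ha hb => hdis a ha a hb rfl) (ihp h1) (ihq h2)
  | star p ih =>
      intro _
      exact opp_star (p.matches' : Set (List π))


section nfa
variable {β σ' : Type*}

lemma evalFrom_append' (A : NFA β σ') (S : Set σ') (u v : List β) :
    A.evalFrom S (u ++ v) = A.evalFrom (A.evalFrom S u) v := by
  simp [NFA.evalFrom, List.foldl_append]

lemma mem_evalFrom_iff' (A : NFA β σ') :
    ∀ (w : List β) (S : Set σ') (q : σ'), q ∈ A.evalFrom S w ↔ ∃ s ∈ S, q ∈ A.evalFrom {s} w := by
  intro w
  induction w with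
  | nil => intro S q; simp [NFA.evalFrom]
  | cons a w ih =>
      intro S q
      show q ∈ A.evalFrom (A.stepSet S a) w ↔ ∃ s ∈ S, q ∈ A.evalFrom (A.stepSet {s} a) w
      rw [ih]
      constructor
      · rintro ⟨r, hr, hq⟩
        rw [NFA.mem_stepSet] at hr
        obtain ⟨t, ht, hrt⟩ := hr
        refine ⟨t, ht, ?_⟩
        rw [ih]
        exact ⟨r, by rw [NFA.mem_stepSet]; exact ⟨t, rfl, hrt⟩, hq⟩
      · rintro ⟨t, ht, hq⟩
        rw [ih] at hq
        obtain ⟨r, hr, hq⟩ := hq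
        rw [NFA.mem_stepSet] at hr
        obtain ⟨t', ht', hrt⟩ := hr
        cases ht'
        exact ⟨r, by rw [NFA.mem_stepSet]; exact ⟨t, ht, hrt⟩, hq⟩

lemma reach_trans (A : NFA β σ') {a b c : σ'} (h1 : Reach A a b) (h2 : Reach A b c) :
    Reach A a c := by
  obtain ⟨u, hu⟩ := h1
  obtain ⟨v, hv⟩ := h2
  exact ⟨u ++ v, by rw [evalFrom_append', mem_evalFrom_iff']; exact ⟨b, hu, hv⟩⟩

lemma reach_refl (A : NFA β σ') (a : σ') : Reach A a a := ⟨[], rfl⟩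

end nfa

section glush
variable {L : Set (List π)} {f : π → Unit}

lemma g_step_none {q : Option π} {b : Unit} :
    q ∈ (glushkov L f).step none b ↔ ∃ y, y ∈ LFirst L ∧ q = some y := by
  constructor
  · rintro ⟨y, hy, _, rfl⟩; exact ⟨y, hy, rfl⟩
  · rintro ⟨y, hy, rfl⟩; exact ⟨y, hy, Subsingleton.elim _ _, rfl⟩

lemma g_step_some {x : π} {q : Option π} {b : Unit} :
    q ∈ (glushkov L f).step (some x) b ↔ ∃ y, Edge L x y ∧ q = some y := by
  constructor
  · rintro ⟨y, hy, _, rfl⟩; exact ⟨y, hy, rfl⟩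
  · rintro ⟨y, hy, rfl⟩; exact ⟨y, hy, Subsingleton.elim _ _, rfl⟩

lemma g_step_isSome {p q : Option π} {b : Unit} (h : q ∈ (glushkov L f).step p b) :
    ∃ y : π, q = some y := by
  cases p with
  | none => obtain ⟨y, _, rfl⟩ := g_step_none.1 h; exact ⟨y, rfl⟩
  | some x => obtain ⟨y, _, rfl⟩ := g_step_some.1 h; exact ⟨y, rfl⟩

lemma g_eval_some : ∀ (w : List Unit) (x : π) (q : Option π),
    q ∈ (glushkov L f).evalFrom {some x} w → ∃ y, q = some y ∧ Conn L x y := by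
  intro w
  induction w using List.reverseRecOn with
  | nil => intro x q hq
           cases hq
           exact ⟨x, rfl, Relation.ReflTransGen.refl⟩
  | append_singleton w b ih =>
      intro x q hq
      rw [evalFrom_append'] at hq
      have hq' : q ∈ (glushkov L f).stepSet ((glushkov L f).evalFrom {some x} w) b := hq
      rw [NFA.mem_stepSet] at hq'
      obtain ⟨r, hr, hqr⟩ := hq'
      obtain ⟨ry, rfl, hconn⟩ := ih x r hr
      obtain ⟨y, hy, rfl⟩ := g_step_some.1 hqr
      exact ⟨y, rfl, hconn.tail hy⟩

lemma g_reach_of_conn {x y : π} (h : Conn L x y) :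
    Reach (glushkov L f) (some x) (some y) := by
  induction h with
  | refl => exact reach_refl _ _
  | tail _ e ih =>
      obtain ⟨u, hu⟩ := ih
      refine ⟨u ++ [()], ?_⟩
      rw [evalFrom_append', NFA.evalFrom_singleton, NFA.mem_stepSet]
      exact ⟨_, hu, g_step_some.2 ⟨_, e, rfl⟩⟩

end glush

/-- For a trimmed `k`-lookahead deterministic unary Glushkov automaton `G` with unique
non-trivial orbit `O` of size `ℓ`, unique in-gate `o_in`, unique out-gate `o_out`,
unique predecessor `s ∉ O` of `o_in` reached from the initial state exactly by the
word of length `m`: a word `w` reaches `o_out` iff `|w| = m + c·ℓ` for some `c ≥ 1`. -/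
theorem stmt19 : ∀ (π : Type) (E : RegularExpression π) (f : π → Unit) (k : ℕ)
    (O : Set (Option π)) (ℓ m : ℕ) (oin oout s : Option π),
    (rchars E).Nodup →
    Trimmed (glushkov E.matches' f) →
    kLA (glushkov E.matches' f) k →
    IsOrbit (glushkov E.matches' f) O →
    NonTrivial (glushkov E.matches' f) O →
    (∀ O', IsOrbit (glushkov E.matches' f) O' → NonTrivial (glushkov E.matches' f) O' →
      O' = O) →
    O.ncard = ℓ →
    InGate (glushkov E.matches' f) O oin →
    (∀ q, InGate (glushkov E.matches' f) O q → q = oin) →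
    OutGate (glushkov E.matches' f) O oout →
    (∀ q, OutGate (glushkov E.matches' f) O q → q = oout) →
    s ∉ O → oin ∈ (glushkov E.matches' f).step s () →
    (∀ s', s' ∉ O → oin ∈ (glushkov E.matches' f).step s' () → s' = s) →
    (∀ w : List Unit, s ∈ (glushkov E.matches' f).evalFrom
        (glushkov E.matches' f).start w ↔ w.length = m) →
    ∀ w : List Unit,
      oout ∈ (glushkov E.matches' f).evalFrom (glushkov E.matches' f).start w ↔
        ∃ c : ℕ, 1 ≤ c ∧ w.length = m + c * ℓ := by
  intro π E f k O ℓ m oin oout s hnd htrim hkla horb hnt _ hncard hin hinuniq hout houtuniq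
    hsO hsoin hsuniq hm w
  classical
  set L : Set (List π) := E.matches' with hL
  set A : NFA Unit (Option π) := glushkov E.matches' f with hA
  have hstart : A.start = {none} := rfl
  -- oin and oout are `some`
  obtain ⟨yin, hyin⟩ := g_step_isSome (L := L) (f := f) hsoin
  have hnoneO : none ∉ O := by
    intro hmem
    have := hinuniq none ⟨hmem, Or.inl rfl⟩
    rw [hyin] at this
    cases this
  have hinO : oin ∈ O := hin.1
  have houtO : oout ∈ O := hout.1
  obtain ⟨zout, hzout⟩ : ∃ z : π, oout = some z := by
    cases oout with
    | none => exact absurd houtO hnoneO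
    | some z => exact ⟨z, rfl⟩
  obtain ⟨q₀, hOdef⟩ := horb
  have hq₀O : q₀ ∈ O := by rw [hOdef]; exact ⟨reach_refl _ _, reach_refl _ _⟩
  obtain ⟨q₀', hq₀'⟩ : ∃ z : π, q₀ = some z := by
    cases q₀ with
    | none => exact absurd hq₀O hnoneO
    | some z => exact ⟨z, rfl⟩
  -- absorption
  have habs : ∀ {a b c : Option π}, a ∈ O → b ∈ O → Reach A a c → Reach A c b → c ∈ O := by
    intro a b c ha hb h1 h2
    rw [hOdef] at ha hb ⊢
    exact ⟨reach_trans A h2 hb.1, reach_trans A ha.2 h1⟩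
  have hreach : ∀ {a b : Option π}, a ∈ O → b ∈ O → Reach A a b := by
    intro a b ha hb
    rw [hOdef] at ha hb
    exact reach_trans A ha.1 hb.2
  -- cycle data
  obtain ⟨p₁, hp₁O, w₁, hw₁ne, hw₁⟩ := hnt
  -- every state of O has a successor inside O
  have hexists : ∀ q ∈ O, ∃ r, r ∈ A.step q () ∧ r ∈ O := by
    intro q hq
    obtain ⟨u₁, hu₁⟩ := hreach hq hp₁O
    obtain ⟨u₂, hu₂⟩ := hreach hp₁O hq
    have hU : q ∈ A.evalFrom {q} (u₁ ++ (w₁ ++ u₂)) := by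
      rw [evalFrom_append', mem_evalFrom_iff']
      refine ⟨p₁, hu₁, ?_⟩
      rw [evalFrom_append', mem_evalFrom_iff']
      exact ⟨p₁, hw₁, hu₂⟩
    have hne : u₁ ++ (w₁ ++ u₂) ≠ [] := by
      simp only [ne_eq, List.append_eq_nil_iff]
      rintro ⟨-, h1, -⟩
      exact hw₁ne h1
    obtain ⟨b, U', hU'⟩ : ∃ b U', u₁ ++ (w₁ ++ u₂) = b :: U' :=
      List.exists_cons_of_ne_nil hne
    rw [hU'] at hU
    have hU2 : q ∈ A.evalFrom (A.stepSet {q} b) U' := hU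
    rw [mem_evalFrom_iff'] at hU2
    obtain ⟨r, hr, hqU⟩ := hU2
    rw [NFA.mem_stepSet] at hr
    obtain ⟨q', hq', hrq⟩ := hr
    cases hq'
    have hrO : r ∈ O := habs hq hq ⟨[b], by
      rw [NFA.evalFrom_singleton, NFA.mem_stepSet]; exact ⟨q, rfl, hrq⟩⟩ ⟨U', hqU⟩
    exact ⟨r, by cases b; exact hrq, hrO⟩
  -- nonemptiness of arbitrary-length evaluations from O
  have hNEmp : ∀ (n : ℕ), ∀ q ∈ O, (A.evalFrom {q} (List.replicate n ())).Nonempty := by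
    intro n
    induction n with
    | zero => intro q _; exact ⟨q, rfl⟩
    | succ n ih =>
        intro q hq
        obtain ⟨r, hr, hrO⟩ := hexists q hq
        obtain ⟨x, hx⟩ := ih r hrO
        rw [List.replicate_succ]
        refine ⟨x, ?_⟩
        have : x ∈ A.evalFrom (A.stepSet {q} ()) (List.replicate n ()) := by
          rw [mem_evalFrom_iff']
          exact ⟨r, by rw [NFA.mem_stepSet]; exact ⟨q, rfl, hr⟩, hx⟩
        exact this
  -- uniqueness of the successor inside O
  have huniq : ∀ q ∈ O, ∀ r₁ r₂, r₁ ∈ A.step q () → r₁ ∈ O → r₂ ∈ A.step q () → r₂ ∈ O →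
      r₁ = r₂ := by
    intro q _ r₁ r₂ h1 h1O h2 h2O
    by_contra hne
    rcases hkla.2 q () r₁ r₂ h1 h2 hne (List.replicate (k - 1) ()) (by simp) with h | h
    · exact (Set.not_nonempty_empty (h ▸ hNEmp (k - 1) r₁ h1O)).elim
    · exact (Set.not_nonempty_empty (h ▸ hNEmp (k - 1) r₂ h2O)).elim
  -- the successor function
  choose g hg1 hg2 using hexists
  obtain ⟨σf, hσf⟩ : ∃ σf : Option π → Option π,
      ∀ q (hq : q ∈ O), σf q = g q hq := by
    refine ⟨fun q => if h : q ∈ O then g q h else q, fun q hq => dif_pos hq⟩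
  have hσstep : ∀ q (hq : q ∈ O), σf q ∈ A.step q () ∧ σf q ∈ O := by
    intro q hq; rw [hσf q hq]; exact ⟨hg1 q hq, hg2 q hq⟩
  have hσuniq : ∀ q (hq : q ∈ O), ∀ r, r ∈ A.step q () → r ∈ O → r = σf q := by
    intro q hq r h1 h2
    exact huniq q hq r (σf q) h1 h2 (hσstep q hq).1 (hσstep q hq).2
  have hiterO : ∀ (t : ℕ) (q : Option π), q ∈ O → σf^[t] q ∈ O := by
    intro t
    induction t with
    | zero => intro q hq; exact hq
    | succ t ih => intro q hq
                   rw [Function.iterate_succ_apply]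
                   exact ih _ (hσstep q hq).2
  -- paths from oin inside evaluation are iterates
  have hlen : ∀ (u : List Unit) (q : Option π), q ∈ A.evalFrom {oin} u → q ∈ O →
      q = σf^[u.length] oin := by
    intro u
    induction u using List.reverseRecOn with
    | nil => intro q hq _; cases hq; rfl
    | append_singleton u b ih =>
        intro q hq hqO
        rw [evalFrom_append', NFA.evalFrom_singleton, NFA.mem_stepSet] at hq
        obtain ⟨r, hr, hqr⟩ := hq
        have hrO : r ∈ O := habs hinO hqO ⟨u, hr⟩ ⟨[()], by
          rw [NFA.evalFrom_singleton, NFA.mem_stepSet]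
          exact ⟨r, rfl, by cases b; exact hqr⟩⟩
        have := ih r hr hrO
        subst this
        have hq' : q = σf (σf^[u.length] oin) := hσuniq _ hrO q (by cases b; exact hqr) hqO
        rw [hq', List.length_append, List.length_singleton,
          ← Function.iterate_succ_apply' σf]
  -- a positive period exists
  have hPex : ∃ c, 0 < c ∧ σf^[c] oin = oin := by
    obtain ⟨u₁, hu₁⟩ := hreach hinO hp₁O
    obtain ⟨u₂, hu₂⟩ := hreach hp₁O hinO
    have hU : oin ∈ A.evalFrom {oin} (u₁ ++ (w₁ ++ u₂)) := by
      rw [evalFrom_append', mem_evalFrom_iff']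
      refine ⟨p₁, hu₁, ?_⟩
      rw [evalFrom_append', mem_evalFrom_iff']
      exact ⟨p₁, hw₁, hu₂⟩
    refine ⟨(u₁ ++ (w₁ ++ u₂)).length, ?_, (hlen _ oin hU hinO).symm⟩
    simp only [List.length_append]
    have : w₁.length ≠ 0 := by simpa using hw₁ne
    omega
  obtain ⟨c, ⟨hcpos, hcfix⟩, hcmin⟩ :
      ∃ c, (0 < c ∧ σf^[c] oin = oin) ∧ ∀ d, d < c → ¬(0 < d ∧ σf^[d] oin = oin) :=
    ⟨Nat.find hPex, Nat.find_spec hPex, fun d hd => Nat.find_min hPex hd⟩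
  have hfixmul : ∀ j, σf^[c * j] oin = oin := by
    intro j
    induction j with
    | zero => rfl
    | succ j ih =>
        rw [Nat.mul_succ, Function.iterate_add_apply, hcfix]
        exact ih
  have hmodc : ∀ t, σf^[t] oin = σf^[t % c] oin := by
    intro t
    conv_lhs => rw [← Nat.mod_add_div t c]
    rw [Function.iterate_add_apply, hfixmul]
  have hinj : ∀ i, i < c → ∀ j, j < c → σf^[i] oin = σf^[j] oin → i = j := by
    have key : ∀ i j, i ≤ j → j < c → σf^[i] oin = σf^[j] oin → i = j := by
      intro i j hij hj h
      by_contra hne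
      have hlt : 0 < j - i := by omega
      have h2 : σf^[(c - i) + i] oin = σf^[(c - i) + j] oin := by
        rw [Function.iterate_add_apply, Function.iterate_add_apply, h]
      have h3 : (c - i) + i = c := by omega
      have h4 : (c - i) + j = (j - i) + c := by omega
      rw [h3, h4, Function.iterate_add_apply, hcfix] at h2
      exact hcmin (j - i) (by omega) ⟨hlt, h2.symm⟩
    intro i hi j hj h
    rcases le_total i j with hij | hij
    · exact key i j hij hj h
    · exact (key j i hij hi h.symm).symm
  have hcov : ∀ p ∈ O, ∃ t, t < c ∧ p = σf^[t] oin := by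
    intro p hp
    obtain ⟨u, hu⟩ := hreach hinO hp
    refine ⟨u.length % c, Nat.mod_lt _ hcpos, ?_⟩
    rw [← hmodc]
    exact hlen u p hu hp
  -- the orbit has exactly c elements, so c = ℓ
  have hceq : c = ℓ := by
    have hOset : O = ↑((Finset.range c).image fun t => σf^[t] oin) := by
      ext p
      simp only [Finset.coe_image, Finset.coe_range, Set.mem_image, Set.mem_Iio]
      constructor
      · intro hp
        obtain ⟨t, ht, rfl⟩ := hcov p hp
        exact ⟨t, ht, rfl⟩
      · rintro ⟨t, _, rfl⟩
        exact hiterO t oin hinO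
    rw [← hncard, hOset, Set.ncard_coe_finset,
      Finset.card_image_of_injOn, Finset.card_range]
    intro a ha b hb h
    exact hinj a (Finset.mem_range.1 ha) b (Finset.mem_range.1 hb) h
  subst hceq
  -- the language-level orbit
  set O'' : Set π := {p | Conn L p q₀' ∧ Conn L q₀' p} with hO''def
  have hOsome : ∀ x : π, some x ∈ O ↔ x ∈ O'' := by
    intro x
    rw [hOdef, hq₀']
    constructor
    · rintro ⟨⟨u1, h1⟩, ⟨u2, h2⟩⟩
      obtain ⟨y1, hy1, hc1⟩ := g_eval_some u1 x _ h1
      obtain ⟨y2, hy2, hc2⟩ := g_eval_some u2 q₀' _ h2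
      rw [Option.some.injEq] at hy1 hy2
      exact ⟨hy1 ▸ hc1, hy2 ▸ hc2⟩
    · rintro ⟨h1, h2⟩
      exact ⟨g_reach_of_conn h1, g_reach_of_conn h2⟩
  -- in-gate and out-gate data at the language level
  have hyinO'' : yin ∈ O'' := by rw [← hOsome, ← hyin]; exact hinO
  have hzoutO'' : zout ∈ O'' := by rw [← hOsome, ← hzout]; exact houtO
  have hNT'' : ∃ p ∈ O'', Relation.TransGen (Edge L) p p := by
    obtain ⟨p₁', rfl⟩ : ∃ z : π, p₁ = some z := by
      cases p₁ with
      | none => exact absurd hp₁O hnoneO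
      | some z => exact ⟨z, rfl⟩
    obtain ⟨b, w₁', rfl⟩ : ∃ b W', w₁ = b :: W' := List.exists_cons_of_ne_nil hw₁ne
    have hw : some p₁' ∈ A.evalFrom (A.stepSet {some p₁'} b) w₁' := hw₁
    rw [mem_evalFrom_iff'] at hw
    obtain ⟨r, hr, hpr⟩ := hw
    rw [NFA.mem_stepSet] at hr
    obtain ⟨t, ht, hrt⟩ := hr
    cases ht
    obtain ⟨r', hEdge, rfl⟩ := g_step_some.1 hrt
    obtain ⟨yy, hyy, hconn⟩ := g_eval_some w₁' r' _ hpr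
    rw [Option.some.injEq] at hyy
    refine ⟨p₁', (hOsome p₁').1 hp₁O, Relation.TransGen.head' hEdge (hyy ▸ hconn)⟩
  have hzOut'' : zout ∈ LLast L ∨ ∃ w', w' ∉ O'' ∧ Edge L zout w' := by
    rcases hout.2 with hacc | ⟨p, hpO, b, hpstep⟩
    · rcases hacc with ⟨y', hy', he⟩ | ⟨he, -⟩
      · rw [hzout, Option.some.injEq] at he
        exact Or.inl (he ▸ hy')
      · rw [hzout] at he; cases he
    · rw [hzout] at hpstep
      obtain ⟨w', hEdge, rfl⟩ := g_step_some.1 hpstep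
      exact Or.inr ⟨w', fun hw' => hpO ((hOsome w').2 hw'), hEdge⟩
  have hyIn'' : yin ∈ LFirst L ∨ ∃ s', s' ∉ O'' ∧ Edge L s' yin := by
    cases s with
    | none =>
        obtain ⟨y', hy', he⟩ := g_step_none.1 hsoin
        rw [hyin, Option.some.injEq] at he
        exact Or.inl (he ▸ hy')
    | some s' =>
        obtain ⟨y', hEdge, he⟩ := g_step_some.1 hsoin
        rw [hyin, Option.some.injEq] at he
        exact Or.inr ⟨s', fun hs' => hsO ((hOsome s').2 hs'), he ▸ hEdge⟩
  have hEdgezy : Edge L zout yin :=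
    opp_matches E hnd q₀' O'' rfl hNT'' zout yin hzoutO'' hyinO'' hzOut'' hyIn''
  have hstep_zy : oin ∈ A.step oout () := by
    rw [hzout, hyin]
    exact g_step_some.2 ⟨yin, hEdgezy, rfl⟩
  have hσoout : σf oout = oin := (hσuniq oout houtO oin hstep_zy hinO).symm
  obtain ⟨d, hd, hdout⟩ := hcov oout houtO
  have hdvd : c ∣ d + 1 := by
    have h1 : σf^[d + 1] oin = oin := by
      rw [Function.iterate_succ_apply', ← hdout, hσoout]
    have h3 : (d + 1) % c = 0 := hinj _ (Nat.mod_lt _ hcpos) 0 hcpos (by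
      rw [← hmodc, h1, Function.iterate_zero_apply])
    exact Nat.dvd_of_mod_eq_zero h3
  have hd0 : (d + 1) ≡ 0 [MOD c] := (Nat.modEq_zero_iff_dvd).2 hdvd
  -- descending lemma
  have hD : ∀ (n : ℕ) (q : Option π), q ∈ O → q ∈ A.evalFrom A.start (List.replicate n ()) →
      ∃ t, n = m + 1 + t ∧ q = σf^[t] oin := by
    intro n
    induction n with
    | zero =>
        intro q hq hev
        rw [hstart] at hev
        cases hev
        exact absurd hq hnoneO
    | succ n ih =>
        intro q hq hev
        rw [List.replicate_succ', evalFrom_append', NFA.evalFrom_singleton,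
          NFA.mem_stepSet] at hev
        obtain ⟨r, hr, hstep⟩ := hev
        by_cases hrO : r ∈ O
        · obtain ⟨t, ht, hqt⟩ := ih r hrO hr
          refine ⟨t + 1, by omega, ?_⟩
          rw [Function.iterate_succ_apply', ← hqt]
          exact (hσuniq r hrO q hstep hq).symm ▸ rfl
        · have hqgate : q = oin := hinuniq q ⟨hq, Or.inr ⟨r, hrO, (), hstep⟩⟩
          subst hqgate
          have hrs : r = s := hsuniq r hrO hstep
          subst hrs
          have hnm : n = m := by
            have := (hm (List.replicate n ())).1 hr
            simpa using this
          exact ⟨0, by omega, rfl⟩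
  -- finally the equivalence
  have hwrep : w = List.replicate w.length () :=
    List.eq_replicate_length.2 (fun b _ => rfl)
  constructor
  · intro hw
    rw [hwrep] at hw
    obtain ⟨t, hn, hq⟩ := hD w.length oout houtO hw
    have hmod : t % c = d % c := by
      have h1 : σf^[t % c] oin = σf^[d % c] oin := by
        rw [← hmodc, ← hmodc, ← hq, ← hdout]
      exact hinj _ (Nat.mod_lt _ hcpos) _ (Nat.mod_lt _ hcpos) h1
    have hdvt : c ∣ t + 1 := by
      have hmod' : (t : ℕ) ≡ d [MOD c] := hmod
      have h2 : (t + 1) ≡ (d + 1) [MOD c] := Nat.ModEq.add_right 1 hmod'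
      exact (Nat.modEq_zero_iff_dvd).1 (h2.trans hd0)
    obtain ⟨c', hc'⟩ := hdvt
    have hc'pos : 1 ≤ c' := by
      rcases Nat.eq_zero_or_pos c' with rfl | h
      · simp at hc'
      · exact h
    refine ⟨c', hc'pos, ?_⟩
    have hlen2 : w.length = m + (t + 1) := by omega
    rw [hlen2, hc', Nat.mul_comm c c']
  · rintro ⟨c', hc1, hlenw⟩
    rw [hwrep, hlenw]
    have hclpos : 1 ≤ c' * c := Nat.mul_pos hc1 hcpos
    have hsm : s ∈ A.evalFrom A.start (List.replicate m ()) := (hm _).2 (by simp)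
    have hoinm : oin ∈ A.evalFrom A.start (List.replicate (m + 1) ()) := by
      rw [List.replicate_succ', evalFrom_append', NFA.evalFrom_singleton, NFA.mem_stepSet]
      exact ⟨s, hsm, hsoin⟩
    have hiter_mem : ∀ (t : ℕ) (q : Option π), q ∈ O →
        σf^[t] q ∈ A.evalFrom {q} (List.replicate t ()) := by
      intro t
      induction t with
      | zero => intro q _; exact rfl
      | succ t ih =>
          intro q hq
          rw [List.replicate_succ', evalFrom_append', NFA.evalFrom_singleton,
            NFA.mem_stepSet, Function.iterate_succ_apply']
          exact ⟨σf^[t] q, ih q hq, (hσstep _ (hiterO t q hq)).1⟩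
    have hmodeq : (c' * c - 1) % c = d % c := by
      have h1 : (c' * c - 1) + 1 = c' * c := by omega
      have h2 : ((c' * c - 1) + 1) ≡ (d + 1) [MOD c] := by
        rw [h1]
        exact ((Nat.modEq_zero_iff_dvd).2 (dvd_mul_left c c')).trans hd0.symm
      exact Nat.ModEq.add_right_cancel' 1 h2
    have hfin : σf^[c' * c - 1] oin = oout := by
      rw [hmodc, hmodeq, ← hmodc, ← hdout]
    have hmemfin : oout ∈ A.evalFrom A.start
        (List.replicate (m + 1) () ++ List.replicate (c' * c - 1) ()) := by
      rw [evalFrom_append', mem_evalFrom_iff']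
      exact ⟨oin, hoinm, hfin ▸ hiter_mem (c' * c - 1) oin hinO⟩
    rw [← List.replicate_add] at hmemfin
    have harith : m + 1 + (c' * c - 1) = m + c' * c := by omega
    rw [harith] at hmemfin
    exact hmemfin


end BD
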